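/- arXiv:2404.19698 — 2 statements merged into one kernel-verified Lean document; each statement's English description precedes it below -/
import Mathlib

section
/- Let A be a densely defined closed linear operator in a complex Hilbert space H that is a bijection from D(A) onto H with bounded inverse A⁻¹ : H → H (i.e. 0 is in the resolvent set of A), and let g ∈ C∞(A). Let f := A⁻¹g be the unique solution of Af = g. Then f ∈ K̄(A,g)^V if and only if the set A(K̄(A,g)^V) := {Av : v ∈ K̄(A,g)^V} is dense in K̄(A,g). -/
open Filter Topology MeasureTheory TopologicalSpace

noncomputable section

namespace KrylovPaper

variable {H : Type*} [NormedAddCommGroup H] [InnerProductSpace ℂ H] [CompleteSpace H]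

/-- `u` is the orbit of `g` under the (unbounded) operator `A`, i.e. `u n = Aⁿ g`,
with every iterate in the domain.  `g ∈ C^∞(A)` is expressed as the existence of such a `u`. -/
def IsOrbit (A : H →ₗ.[ℂ] H) (g : H) (u : ℕ → H) : Prop :=
  u 0 = g ∧ ∀ n, ∃ h : u n ∈ A.domain, A ⟨u n, h⟩ = u (n + 1)

/-- The Krylov subspace `K(A,g) = span {Aᵏ g : k ∈ ℕ₀}`, expressed via the orbit `u`. -/
def krylov (u : ℕ → H) : Set H :=
  (Submodule.span ℂ (Set.range u) : Set H)

/-- The graph norm `‖x‖_A` of an element `x ∈ D(A)`. -/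
def gnorm (A : H →ₗ.[ℂ] H) {x : H} (hx : x ∈ A.domain) : ℝ :=
  Real.sqrt (‖x‖ ^ 2 + ‖A ⟨x, hx⟩‖ ^ 2)

/-- Graph-norm closure `K̄^V` of a set `K`: the elements `x ∈ D(A)` approximable in
graph norm by sequences from `K`. -/
def graphClosure (A : H →ₗ.[ℂ] H) (K : Set H) : Set H :=
  {x | ∃ hx : x ∈ A.domain, ∃ p : ℕ → H, (∀ k, p k ∈ K) ∧
    ∃ hp : ∀ k, p k ∈ A.domain,
      Tendsto (fun k => gnorm A (A.domain.sub_mem (hp k) hx)) atTop (𝓝 0)}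

/-- The graph-inner-product orthogonal complement `K^{⊥_V}` of a set `K ⊆ D(A)`. -/
def perpV (A : H →ₗ.[ℂ] H) (K : Set H) : Set H :=
  {x | ∃ hx : x ∈ A.domain, ∀ y, y ∈ K → ∀ hy : y ∈ A.domain,
    (inner ℂ x y : ℂ) + (inner ℂ (A ⟨x, hx⟩) (A ⟨y, hy⟩) : ℂ) = 0}

/-- The image `A(S)` of a subset `S` of the domain of `A`. -/
def opImage (A : H →ₗ.[ℂ] H) (S : Set H) : Set H :=
  {w | ∃ x, ∃ hx : x ∈ A.domain, x ∈ S ∧ A ⟨x, hx⟩ = w}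

/-- The Krylov intersection `I(A,g) = K̄(A,g) ∩ A(K(A,g)^{⊥_V})`. -/
def krylovIntersection (A : H →ₗ.[ℂ] H) (u : ℕ → H) : Set H :=
  closure (krylov u) ∩ opImage A (perpV A (krylov u))

/-- `μ` is a representing measure for the Hamburger moment problem of `(A,g)`,
where `u n = Aⁿ g`: each monomial is `μ`-integrable and `∫ λⁿ dμ = ⟨Aⁿ g, g⟩`. -/
def IsMomentMeasure (g : H) (u : ℕ → H) (μ : Measure ℝ) : Prop :=
  ∀ n : ℕ, Integrable (fun x : ℝ => x ^ n) μ ∧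
    (inner ℂ (u n) g : ℂ) = ((∫ x : ℝ, x ^ n ∂μ : ℝ) : ℂ)

/-- Determinacy of the Hamburger moment problem associated with `(A,g)`:
there is at most one finite positive Borel measure with the prescribed moments. -/
def IsDeterminate (g : H) (u : ℕ → H) : Prop :=
  ∀ μ ν : Measure ℝ, IsFiniteMeasure μ → IsFiniteMeasure ν →
    IsMomentMeasure g u μ → IsMomentMeasure g u ν → μ = ν

/-- `g` is of the bounded class with respect to `A`. -/
def IsBoundedVector (A : H →ₗ.[ℂ] H) (g : H) : Prop :=
  ∃ u, IsOrbit A g u ∧ ∃ B : ℝ, 0 < B ∧ ∀ n : ℕ, 1 ≤ n → ‖u n‖ ≤ B ^ n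

/-- The weak "norm" induced by a dense sequence `v` of the closed unit ball. -/
def wnorm (v : ℕ → H) (x : H) : ℝ :=
  ∑' n : ℕ, (2 : ℝ)⁻¹ ^ (n + 1) * ‖(inner ℂ (v n) x : ℂ)‖

/-- One-sided weak gap `d_w(C,D)`. -/
def dw (v : ℕ → H) (C D : Set H) : ℝ :=
  ⨆ u : C, ⨅ w : D, wnorm v ((u : H) - (w : H))

/-- The weak-gap metric `d̂_w(C,D)`. -/
def dhat (v : ℕ → H) (C D : Set H) : ℝ :=
  max (dw v C D) (dw v D C)

/-- The weak-gap metric between (closed) subspaces: weak gap of their unit balls. -/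
def dhatSub (v : ℕ → H) (M N : Submodule ℂ H) : ℝ :=
  dhat v ((M : Set H) ∩ Metric.closedBall 0 1) ((N : Set H) ∩ Metric.closedBall 0 1)

/-- A set is weakly closed if it is closed in the weak topology of `H`. -/
def WeaklyClosed (C : Set H) : Prop :=
  IsClosed (⇑(toWeakSpace ℂ H) '' C)
set_option linter.unusedSectionVars false

variable {A : H →ₗ.[ℂ] H}

lemma gnorm_nonneg {x : H} (hx : x ∈ A.domain) : 0 ≤ gnorm A hx :=
  Real.sqrt_nonneg _

lemma norm_le_gnorm {x : H} (hx : x ∈ A.domain) : ‖x‖ ≤ gnorm A hx := by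
  rw [gnorm]
  refine le_trans ?_ (Real.sqrt_le_sqrt (le_add_of_nonneg_right (by positivity)))
  rw [Real.sqrt_sq (norm_nonneg _)]

lemma norm_map_le_gnorm {x : H} (hx : x ∈ A.domain) : ‖A ⟨x, hx⟩‖ ≤ gnorm A hx := by
  rw [gnorm]
  refine le_trans ?_ (Real.sqrt_le_sqrt (le_add_of_nonneg_left (by positivity)))
  rw [Real.sqrt_sq (norm_nonneg _)]

lemma gnorm_le_add {x : H} (hx : x ∈ A.domain) :
    gnorm A hx ≤ ‖x‖ + ‖A ⟨x, hx⟩‖ := by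
  rw [gnorm]
  refine le_trans (Real.sqrt_le_sqrt ?_) (le_of_eq (Real.sqrt_sq (by positivity)))
  nlinarith [norm_nonneg x, norm_nonneg (A ⟨x, hx⟩)]

lemma map_sub' {x y : H} (hx : x ∈ A.domain) (hy : y ∈ A.domain) :
    A ⟨x - y, A.domain.sub_mem hx hy⟩ = A ⟨x, hx⟩ - A ⟨y, hy⟩ := by
  have : (⟨x - y, A.domain.sub_mem hx hy⟩ : A.domain) = ⟨x, hx⟩ - ⟨y, hy⟩ := rfl
  rw [this, A.map_sub]

lemma mem_graphClosure_iff {K : Set H} {x : H} :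
    x ∈ graphClosure A K ↔ ∃ hx : x ∈ A.domain, ∃ p : ℕ → H, (∀ k, p k ∈ K) ∧
      ∃ hp : ∀ k, p k ∈ A.domain,
        Tendsto p atTop (𝓝 x) ∧
        Tendsto (fun k => A ⟨p k, hp k⟩) atTop (𝓝 (A ⟨x, hx⟩)) := by
  constructor
  · rintro ⟨hx, p, hpK, hp, htend⟩
    refine ⟨hx, p, hpK, hp, ?_, ?_⟩
    · rw [tendsto_iff_norm_sub_tendsto_zero]
      refine squeeze_zero (fun k => norm_nonneg _) (fun k => ?_) htend
      exact norm_le_gnorm _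
    · rw [tendsto_iff_norm_sub_tendsto_zero]
      refine squeeze_zero (fun k => norm_nonneg _) (fun k => ?_) htend
      rw [← map_sub']
      exact norm_map_le_gnorm _
  · rintro ⟨hx, p, hpK, hp, h1, h2⟩
    refine ⟨hx, p, hpK, hp, ?_⟩
    rw [tendsto_iff_norm_sub_tendsto_zero] at h1 h2
    refine squeeze_zero (fun k => gnorm_nonneg _) (fun k => ?_) (by simpa using h1.add h2)
    refine le_trans (gnorm_le_add _) ?_
    gcongr
    rw [map_sub' (hp k) hx]

lemma map_add' {x y : H} (hx : x ∈ A.domain) (hy : y ∈ A.domain) :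
    A ⟨x + y, A.domain.add_mem hx hy⟩ = A ⟨x, hx⟩ + A ⟨y, hy⟩ := by
  have : (⟨x + y, A.domain.add_mem hx hy⟩ : A.domain) = ⟨x, hx⟩ + ⟨y, hy⟩ := rfl
  rw [this, A.map_add]

lemma map_smul' (c : ℂ) {x : H} (hx : x ∈ A.domain) :
    A ⟨c • x, A.domain.smul_mem c hx⟩ = c • A ⟨x, hx⟩ := by
  have : (⟨c • x, A.domain.smul_mem c hx⟩ : A.domain) = c • (⟨x, hx⟩ : A.domain) := rfl
  rw [this, A.map_smul]

lemma graphClosure_add {K : Set H} (hKadd : ∀ a ∈ K, ∀ b ∈ K, a + b ∈ K)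
    {x y : H} (hx : x ∈ graphClosure A K) (hy : y ∈ graphClosure A K) :
    x + y ∈ graphClosure A K := by
  rw [mem_graphClosure_iff] at hx hy ⊢
  obtain ⟨hx, p, hpK, hp, hp1, hp2⟩ := hx
  obtain ⟨hy, q, hqK, hq, hq1, hq2⟩ := hy
  refine ⟨A.domain.add_mem hx hy, fun k => p k + q k,
    fun k => hKadd _ (hpK k) _ (hqK k), fun k => A.domain.add_mem (hp k) (hq k),
    hp1.add hq1, ?_⟩
  have h1 : ∀ k, A ⟨p k + q k, A.domain.add_mem (hp k) (hq k)⟩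
      = A ⟨p k, hp k⟩ + A ⟨q k, hq k⟩ := fun k => map_add' _ _
  rw [map_add' hx hy]
  simp only [h1]
  exact hp2.add hq2

lemma graphClosure_smul {K : Set H} (hKsmul : ∀ c : ℂ, ∀ a ∈ K, c • a ∈ K)
    (c : ℂ) {x : H} (hx : x ∈ graphClosure A K) :
    c • x ∈ graphClosure A K := by
  rw [mem_graphClosure_iff] at hx ⊢
  obtain ⟨hx, p, hpK, hp, hp1, hp2⟩ := hx
  refine ⟨A.domain.smul_mem c hx, fun k => c • p k,
    fun k => hKsmul c _ (hpK k), fun k => A.domain.smul_mem c (hp k),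
    hp1.const_smul c, ?_⟩
  have h1 : ∀ k, A ⟨c • p k, A.domain.smul_mem c (hp k)⟩
      = c • A ⟨p k, hp k⟩ := fun k => map_smul' _ _
  rw [map_smul']
  simp only [h1]
  exact hp2.const_smul c
theorem statement3 (A : H →ₗ.[ℂ] H) (hdense : Dense (A.domain : Set H))
    (hclosed : A.IsClosed)
    (hinj : Function.Injective fun x : A.domain => A x)
    (hsurj : ∀ y : H, ∃ x : A.domain, A x = y)
    (hbdd : ∃ c : ℝ, 0 ≤ c ∧ ∀ y : A.domain, ‖(y : H)‖ ≤ c * ‖A y‖)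
    (g : H) (u : ℕ → H) (hu : IsOrbit A g u)
    (f : H) (hf : f ∈ A.domain) (hAf : A ⟨f, hf⟩ = g) :
    f ∈ graphClosure A (krylov u) ↔
      closure (opImage A (graphClosure A (krylov u))) = closure (krylov u) := by
  obtain ⟨hu0, huA⟩ := hu
  obtain ⟨c, hc0, hcle⟩ := hbdd
  set V := graphClosure A (krylov u) with hV
  have hrange : Set.range u ⊆ (A.domain : Set H) := by
    rintro _ ⟨n, rfl⟩
    exact (huA n).choose
  have hKdom : ∀ x ∈ krylov u, x ∈ A.domain := fun x hx =>
    Submodule.span_le.mpr hrange hx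
  have hKadd : ∀ a ∈ krylov u, ∀ b ∈ krylov u, a + b ∈ krylov u := fun a ha b hb =>
    Submodule.add_mem _ ha hb
  have hKsmul : ∀ cc : ℂ, ∀ a ∈ krylov u, cc • a ∈ krylov u := fun cc a ha =>
    Submodule.smul_mem _ cc ha
  have hmemK : ∀ n, u n ∈ krylov u := fun n =>
    Submodule.subset_span ⟨n, rfl⟩
  -- A maps the Krylov space into itself
  have hAK : ∀ x, x ∈ krylov u → ∀ hx : x ∈ A.domain, A ⟨x, hx⟩ ∈ krylov u := by
    intro x hxK
    have : ∃ hx : x ∈ A.domain, A ⟨x, hx⟩ ∈ krylov u := by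
      refine Submodule.span_induction ?_ ?_ ?_ ?_ hxK
      · rintro _ ⟨n, rfl⟩
        obtain ⟨h, he⟩ := huA n
        exact ⟨h, he ▸ hmemK (n + 1)⟩
      · refine ⟨A.domain.zero_mem, ?_⟩
        have h0 : (⟨(0 : H), A.domain.zero_mem⟩ : A.domain) = 0 := rfl
        rw [h0, A.map_zero]
        exact Submodule.zero_mem _
      · rintro a b _ _ ⟨ha, haK⟩ ⟨hb, hbK⟩
        refine ⟨A.domain.add_mem ha hb, ?_⟩
        rw [map_add' ha hb]
        exact hKadd _ haK _ hbK
      · rintro cc a _ ⟨ha, haK⟩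
        refine ⟨A.domain.smul_mem cc ha, ?_⟩
        rw [map_smul' cc ha]
        exact hKsmul cc _ haK
    obtain ⟨hx', hmem⟩ := this
    intro hx
    exact hmem
  -- the Krylov space is contained in its graph closure
  have hKV : krylov u ⊆ V := by
    intro x hxK
    refine ⟨hKdom x hxK, fun _ => x, fun _ => hxK, fun _ => hKdom x hxK, ?_⟩
    have hgz : gnorm A (A.domain.sub_mem (hKdom x hxK) (hKdom x hxK)) = 0 := by
      have hx0 : (⟨x - x, A.domain.sub_mem (hKdom x hxK) (hKdom x hxK)⟩ : A.domain) = 0 := by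
        ext; simp
      rw [gnorm]
      have : A ⟨x - x, A.domain.sub_mem (hKdom x hxK) (hKdom x hxK)⟩ = 0 := by
        rw [hx0, A.map_zero]
      rw [this]
      simp
    simp only [hgz]
    exact tendsto_const_nhds
  -- A maps V into the closure of the Krylov space
  have hAV : opImage A V ⊆ closure (krylov u) := by
    rintro w ⟨x, hx, hxV, rfl⟩
    rw [hV, mem_graphClosure_iff] at hxV
    obtain ⟨hx', p, hpK, hp, h1, h2⟩ := hxV
    have : A ⟨x, hx⟩ = A ⟨x, hx'⟩ := rfl
    rw [this]
    exact mem_closure_of_tendsto h2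
      (Eventually.of_forall fun k => hAK _ (hpK k) (hp k))
  constructor
  · -- forward direction
    intro hfV
    refine subset_antisymm (closure_minimal hAV isClosed_closure) ?_
    refine closure_mono ?_
    intro y hyK
    refine Submodule.span_induction ?_ ?_ ?_ ?_ hyK
    · rintro _ ⟨n, rfl⟩
      cases n with
      | zero => exact ⟨f, hf, hfV, by rw [hAf, hu0]⟩
      | succ m =>
        obtain ⟨h, he⟩ := huA m
        exact ⟨u m, h, hKV (hmemK m), he⟩
    · refine ⟨0, A.domain.zero_mem, hKV (Submodule.zero_mem _), ?_⟩
      have h0 : (⟨(0 : H), A.domain.zero_mem⟩ : A.domain) = 0 := rfl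
      rw [h0, A.map_zero]
    · rintro a b _ _ ⟨x, hx, hxV, rfl⟩ ⟨y, hy, hyV, rfl⟩
      exact ⟨x + y, A.domain.add_mem hx hy, graphClosure_add hKadd hxV hyV, map_add' hx hy⟩
    · rintro cc a _ ⟨x, hx, hxV, rfl⟩
      exact ⟨cc • x, A.domain.smul_mem cc hx, graphClosure_smul hKsmul cc hxV, map_smul' cc hx⟩
  · -- backward direction
    intro hcl
    have hgcl : g ∈ closure (opImage A V) := by
      rw [hcl]
      exact subset_closure (hu0 ▸ hmemK 0)
    obtain ⟨w, hw, hwlim⟩ := mem_closure_iff_seq_limit.mp hgcl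
    choose v hvdom hvV hvA using hw
    have hwnorm : Tendsto (fun k => ‖w k - g‖) atTop (𝓝 0) :=
      tendsto_iff_norm_sub_tendsto_zero.mp hwlim
    have hAsub : ∀ k, ‖A ⟨v k, hvdom k⟩ - A ⟨f, hf⟩‖ = ‖w k - g‖ := by
      intro k; rw [hvA, hAf]
    -- v k → f
    have hvf : Tendsto (fun k => ‖v k - f‖) atTop (𝓝 0) := by
      refine squeeze_zero (fun k => norm_nonneg _) (fun k => ?_)
        (by simpa using hwnorm.const_mul c)
      have := hcle ⟨v k - f, A.domain.sub_mem (hvdom k) hf⟩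
      rw [map_sub' (hvdom k) hf] at this
      simpa [hAsub k] using this
    -- pick good approximations from K
    have hq : ∀ k : ℕ, ∃ x, x ∈ krylov u ∧ ∃ hx : x ∈ A.domain,
        ‖x - v k‖ ≤ 1 / (k + 1 : ℝ) ∧
        ‖A ⟨x, hx⟩ - A ⟨v k, hvdom k⟩‖ ≤ 1 / (k + 1 : ℝ) := by
      intro k
      obtain ⟨hxk, p, hpK, hp, htend⟩ := hvV k
      have hpos : (0 : ℝ) < 1 / (k + 1 : ℝ) := by positivity
      obtain ⟨j, hj⟩ := (htend.eventually (gt_mem_nhds hpos)).exists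
      refine ⟨p j, hpK j, hp j, ?_, ?_⟩
      · exact le_of_lt (lt_of_le_of_lt (norm_le_gnorm _) hj)
      · have h2 := norm_map_le_gnorm (A.domain.sub_mem (hp j) hxk)
        rw [map_sub' (hp j) hxk] at h2
        have hsame : A ⟨v k, hxk⟩ = A ⟨v k, hvdom k⟩ := rfl
        rw [hsame] at h2
        exact le_of_lt (lt_of_le_of_lt h2 hj)
    choose q hqK hqdom hq1 hq2 using hq
    have honek : Tendsto (fun k : ℕ => 1 / (k + 1 : ℝ)) atTop (𝓝 0) :=
      tendsto_one_div_add_atTop_nhds_zero_nat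
    rw [hV, mem_graphClosure_iff]
    refine ⟨hf, q, hqK, hqdom, ?_, ?_⟩
    · rw [tendsto_iff_norm_sub_tendsto_zero]
      refine squeeze_zero (fun k => norm_nonneg _) (fun k => ?_)
        (by simpa using honek.add hvf)
      calc ‖q k - f‖ ≤ ‖q k - v k‖ + ‖v k - f‖ := by
            simpa [dist_eq_norm] using dist_triangle (q k) (v k) f
        _ ≤ 1 / (k + 1 : ℝ) + ‖v k - f‖ := by gcongr; exact hq1 k
        _ = (k + 1 : ℝ)⁻¹ + ‖v k - f‖ := by rw [one_div]
    · rw [tendsto_iff_norm_sub_tendsto_zero]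
      refine squeeze_zero (fun k => norm_nonneg _) (fun k => ?_)
        (by simpa using honek.add hwnorm)
      calc ‖A ⟨q k, hqdom k⟩ - A ⟨f, hf⟩‖
          ≤ ‖A ⟨q k, hqdom k⟩ - A ⟨v k, hvdom k⟩‖ + ‖A ⟨v k, hvdom k⟩ - A ⟨f, hf⟩‖ := by
            simpa [dist_eq_norm] using
              dist_triangle (A ⟨q k, hqdom k⟩) (A ⟨v k, hvdom k⟩) (A ⟨f, hf⟩)
        _ ≤ 1 / (k + 1 : ℝ) + ‖w k - g‖ := by
            rw [hAsub k]; gcongr; exact hq2 k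
        _ = (k + 1 : ℝ)⁻¹ + ‖w k - g‖ := by rw [one_div]

end KrylovPaper
end
end

section
/- Let H be a separable complex Hilbert space, M a closed linear subspace, and (M_n)_{n∈ℕ} a sequence of closed linear subspaces such that (i) M_n ⊆ M_{n+1} for all n and (ii) d̂_w(M_n, M) → 0 as n → ∞. Then the orthogonal projections converge in the strong operator topology: for every x ∈ H, ‖P_{M_n}x − P_M x‖ → 0 as n → ∞, where P_{M_n} and P_M are the orthogonal projections onto M_n and M respectively. -/
open Filter Topology MeasureTheory TopologicalSpace

noncomputable section

namespace KrylovPaper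

variable {H : Type*} [NormedAddCommGroup H] [InnerProductSpace ℂ H] [CompleteSpace H]

/-! ### Auxiliary lemmas for statement 11 -/

lemma wnorm_summable (v : ℕ → H) (hv : ∀ n, v n ∈ Metric.closedBall (0 : H) 1) (x : H) :
    Summable (fun n : ℕ => (2 : ℝ)⁻¹ ^ (n + 1) * ‖(inner ℂ (v n) x : ℂ)‖) := by
  have hb : ∀ n : ℕ, (2 : ℝ)⁻¹ ^ (n + 1) * ‖(inner ℂ (v n) x : ℂ)‖ ≤
      (2 : ℝ)⁻¹ ^ n * ((2:ℝ)⁻¹ * ‖x‖) := by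
    intro n
    have h1 : ‖(inner ℂ (v n) x : ℂ)‖ ≤ ‖v n‖ * ‖x‖ := norm_inner_le_norm _ _
    have h2 : ‖v n‖ ≤ 1 := by simpa [Metric.mem_closedBall] using hv n
    have h3 : ‖(inner ℂ (v n) x : ℂ)‖ ≤ ‖x‖ :=
      h1.trans (by nlinarith [norm_nonneg x])
    calc (2 : ℝ)⁻¹ ^ (n + 1) * ‖(inner ℂ (v n) x : ℂ)‖
        ≤ (2 : ℝ)⁻¹ ^ (n + 1) * ‖x‖ := by
          exact mul_le_mul_of_nonneg_left h3 (by positivity)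
      _ = (2 : ℝ)⁻¹ ^ n * ((2:ℝ)⁻¹ * ‖x‖) := by ring
  refine Summable.of_nonneg_of_le (fun n => by positivity) hb ?_
  exact (summable_geometric_of_lt_one (by norm_num) (by norm_num)).mul_right _

lemma wnorm_nonneg' (v : ℕ → H) (x : H) : 0 ≤ wnorm v x :=
  tsum_nonneg (fun n => by positivity)

lemma wnorm_le_norm (v : ℕ → H) (hv : ∀ n, v n ∈ Metric.closedBall (0 : H) 1) (x : H) :
    wnorm v x ≤ ‖x‖ := by
  have hsum := wnorm_summable v hv x
  have hsum2 : Summable (fun n : ℕ => (2 : ℝ)⁻¹ ^ n * ((2:ℝ)⁻¹ * ‖x‖)) :=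
    (summable_geometric_of_lt_one (by norm_num) (by norm_num)).mul_right _
  have hle : wnorm v x ≤ ∑' n : ℕ, (2 : ℝ)⁻¹ ^ n * ((2:ℝ)⁻¹ * ‖x‖) := by
    refine Summable.tsum_le_tsum ?_ hsum hsum2
    intro n
    have h1 : ‖(inner ℂ (v n) x : ℂ)‖ ≤ ‖v n‖ * ‖x‖ := norm_inner_le_norm _ _
    have h2 : ‖v n‖ ≤ 1 := by simpa [Metric.mem_closedBall] using hv n
    have h3 : ‖(inner ℂ (v n) x : ℂ)‖ ≤ ‖x‖ := h1.trans (by nlinarith [norm_nonneg x])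
    calc (2 : ℝ)⁻¹ ^ (n + 1) * ‖(inner ℂ (v n) x : ℂ)‖
        ≤ (2 : ℝ)⁻¹ ^ (n + 1) * ‖x‖ := mul_le_mul_of_nonneg_left h3 (by positivity)
      _ = (2 : ℝ)⁻¹ ^ n * ((2:ℝ)⁻¹ * ‖x‖) := by ring
  refine hle.trans ?_
  rw [tsum_mul_right, tsum_geometric_of_lt_one (by norm_num) (by norm_num)]
  ring_nf
  linarith [norm_nonneg x]

lemma coeff_le_wnorm (v : ℕ → H) (hv : ∀ n, v n ∈ Metric.closedBall (0 : H) 1) (x : H)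
    (m : ℕ) : ‖(inner ℂ (v m) x : ℂ)‖ ≤ 2 ^ (m + 1) * wnorm v x := by
  have h := Summable.le_tsum (wnorm_summable v hv x) m (fun n _ => by positivity)
  have h2 : (2:ℝ)⁻¹ ^ (m+1) * ‖(inner ℂ (v m) x : ℂ)‖ ≤ wnorm v x := h
  have hpos : (0:ℝ) < 2 ^ (m+1) := by positivity
  calc ‖(inner ℂ (v m) x : ℂ)‖
      = 2 ^ (m+1) * ((2:ℝ)⁻¹ ^ (m+1) * ‖(inner ℂ (v m) x : ℂ)‖) := by
        rw [← mul_assoc, ← mul_pow]; norm_num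
    _ ≤ 2 ^ (m+1) * wnorm v x := mul_le_mul_of_nonneg_left h2 (le_of_lt hpos)

/-- If `wnorm v (d n) → 0` with `d` bounded, then `⟪z, d n⟫ → 0` for every `z`. -/
lemma inner_tendsto_of_wnorm (v : ℕ → H) (hv : ∀ n, v n ∈ Metric.closedBall (0 : H) 1)
    (hvdense : Metric.closedBall (0 : H) 1 ⊆ closure (Set.range v))
    (d : ℕ → H) (hd : ∀ n, ‖d n‖ ≤ 2)
    (hwd : Tendsto (fun n => wnorm v (d n)) atTop (𝓝 0)) (z : H) :
    Tendsto (fun n => ‖(inner ℂ z (d n) : ℂ)‖) atTop (𝓝 0) := by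
  rcases eq_or_ne z 0 with rfl | hz
  · simpa using tendsto_const_nhds (α := ℝ) (x := (0:ℝ))
  have hc : (0:ℝ) < ‖z‖ := norm_pos_iff.mpr hz
  rw [Metric.tendsto_atTop]
  intro ε hε
  -- approximate z/‖z‖ by some v m
  have hz' : (‖z‖⁻¹ : ℝ) • z ∈ Metric.closedBall (0 : H) 1 := by
    simp [norm_smul, abs_of_nonneg (inv_nonneg.mpr hc.le), inv_mul_cancel₀ hc.ne']
  have hmem := hvdense hz'
  rw [Metric.mem_closure_iff] at hmem
  obtain ⟨b, hb, hbd⟩ := hmem (ε / (4 * ‖z‖)) (by positivity)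
  obtain ⟨m, rfl⟩ := hb
  -- key : ‖z - ‖z‖ • v m‖ < ε/4
  have happrox : ‖z - (‖z‖ : ℝ) • v m‖ < ε / 4 := by
    have : z - (‖z‖ : ℝ) • v m = (‖z‖ : ℝ) • ((‖z‖⁻¹ : ℝ) • z - v m) := by
      rw [smul_sub, smul_smul, mul_inv_cancel₀ hc.ne', one_smul]
    rw [this, norm_smul, Real.norm_eq_abs, abs_of_nonneg hc.le]
    have hd2 : ‖(‖z‖⁻¹ : ℝ) • z - v m‖ < ε / (4 * ‖z‖) := by
      rwa [dist_eq_norm] at hbd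
    calc ‖z‖ * ‖(‖z‖⁻¹ : ℝ) • z - v m‖ < ‖z‖ * (ε / (4 * ‖z‖)) :=
          mul_lt_mul_of_pos_left hd2 hc
      _ = ε / 4 := by field_simp
  -- choose N from wnorm convergence
  have hwpos : (0:ℝ) < ε / (4 * ‖z‖ * 2 ^ (m+1)) := by positivity
  rw [Metric.tendsto_atTop] at hwd
  obtain ⟨N, hN⟩ := hwd _ hwpos
  refine ⟨N, fun n hn => ?_⟩
  have hw : wnorm v (d n) < ε / (4 * ‖z‖ * 2 ^ (m+1)) := by
    have := hN n hn
    rwa [Real.dist_eq, sub_zero, abs_of_nonneg (wnorm_nonneg' v _)] at this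
  have hsplit : ‖(inner ℂ z (d n) : ℂ)‖ ≤
      ‖z - (‖z‖ : ℝ) • v m‖ * ‖d n‖ + ‖z‖ * ‖(inner ℂ (v m) (d n) : ℂ)‖ := by
    have : (inner ℂ z (d n) : ℂ) =
        (inner ℂ (z - (‖z‖ : ℝ) • v m) (d n) : ℂ) + (inner ℂ ((‖z‖ : ℝ) • v m) (d n) : ℂ) := by
      rw [← inner_add_left, sub_add_cancel]
    rw [this]
    refine (norm_add_le _ _).trans (add_le_add ?_ ?_)
    · exact norm_inner_le_norm _ _
    · rw [RCLike.real_smul_eq_coe_smul (K := ℂ), inner_smul_left]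
      simp [norm_mul, Complex.norm_real, Real.norm_eq_abs, abs_of_nonneg hc.le]
  have h1 : ‖z - (‖z‖ : ℝ) • v m‖ * ‖d n‖ ≤ (ε/4) * 2 := by
    have := hd n
    have h0 : (0:ℝ) ≤ ‖d n‖ := norm_nonneg _
    nlinarith
  have h2 : ‖z‖ * ‖(inner ℂ (v m) (d n) : ℂ)‖ < ε / 2 := by
    have hcoef := coeff_le_wnorm v hv (d n) m
    have : ‖(inner ℂ (v m) (d n) : ℂ)‖ < 2 ^ (m+1) * (ε / (4 * ‖z‖ * 2 ^ (m+1))) := by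
      calc ‖(inner ℂ (v m) (d n) : ℂ)‖ ≤ 2 ^ (m+1) * wnorm v (d n) := hcoef
        _ < 2 ^ (m+1) * (ε / (4 * ‖z‖ * 2 ^ (m+1))) := by
            exact mul_lt_mul_of_pos_left hw (by positivity)
    have heq : (2:ℝ) ^ (m+1) * (ε / (4 * ‖z‖ * 2 ^ (m+1))) = ε / (4 * ‖z‖) := by
      field_simp
    rw [heq] at this
    calc ‖z‖ * ‖(inner ℂ (v m) (d n) : ℂ)‖ < ‖z‖ * (ε / (4 * ‖z‖)) :=
          mul_lt_mul_of_pos_left this hc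
      _ = ε / 4 := by field_simp
      _ < ε / 2 := by linarith
  rw [Real.dist_eq, sub_zero, abs_of_nonneg (norm_nonneg _)]
  calc ‖(inner ℂ z (d n) : ℂ)‖ ≤
      ‖z - (‖z‖ : ℝ) • v m‖ * ‖d n‖ + ‖z‖ * ‖(inner ℂ (v m) (d n) : ℂ)‖ := hsplit
    _ < (ε/4) * 2 + ε / 2 := by
        exact add_lt_add_of_le_of_lt h1 h2
    _ = ε := by ring

/-- If `x` (of norm ≤ 1) is weakly approximated by unit-ball elements of a complete
submodule `N`, then `x ∈ N`. -/
lemma mem_of_wnorm_approx (v : ℕ → H) (hv : ∀ n, v n ∈ Metric.closedBall (0 : H) 1)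
    (hvdense : Metric.closedBall (0 : H) 1 ⊆ closure (Set.range v))
    (N : Submodule ℂ H) [CompleteSpace N] (x : H) (hx : ‖x‖ ≤ 1)
    (y : ℕ → H) (hy : ∀ n, y n ∈ N) (hyb : ∀ n, ‖y n‖ ≤ 1)
    (hw : Tendsto (fun n => wnorm v (x - y n)) atTop (𝓝 0)) : x ∈ N := by
  set z := x - (N.orthogonalProjection x : H) with hzdef
  have hzperp : z ∈ Nᗮ := N.sub_starProjection_mem_orthogonal x
  have hinner0 : ∀ n, (inner ℂ z (y n) : ℂ) = 0 := by
    intro n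
    rw [← inner_eq_zero_symm]
    exact hzperp _ (hy n)
  have hbound : ∀ n, ‖x - y n‖ ≤ 2 := by
    intro n
    calc ‖x - y n‖ ≤ ‖x‖ + ‖y n‖ := norm_sub_le _ _
      _ ≤ 1 + 1 := add_le_add hx (hyb n)
      _ = 2 := by norm_num
  have htend := inner_tendsto_of_wnorm v hv hvdense (fun n => x - y n) hbound hw z
  have hconst : (fun n => ‖(inner ℂ z (x - y n) : ℂ)‖) = fun _ => ‖(inner ℂ z x : ℂ)‖ := by
    funext n
    rw [inner_sub_right, hinner0 n, sub_zero]
  rw [hconst] at htend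
  have hzero : ‖(inner ℂ z x : ℂ)‖ = 0 := tendsto_nhds_unique tendsto_const_nhds htend
  have hzx : (inner ℂ z x : ℂ) = 0 := norm_eq_zero.mp hzero
  -- inner ℂ z x = ‖z‖²
  have hproj : (inner ℂ z ((N.orthogonalProjection x : H)) : ℂ) = 0 := by
    rw [← inner_eq_zero_symm]
    exact hzperp _ (N.orthogonalProjection x).2
  have hzz : (inner ℂ z z : ℂ) = 0 := by
    have : (inner ℂ z x : ℂ) = inner ℂ z z + inner ℂ z ((N.orthogonalProjection x : H)) := by
      rw [← inner_add_right, hzdef, sub_add_cancel]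
    rw [this, hproj, add_zero] at hzx
    exact hzx
  have hz0 : z = 0 := inner_self_eq_zero.mp hzz
  have : x = (N.orthogonalProjection x : H) := by
    have := sub_eq_zero.mp hz0
    exact this
  rw [this]
  exact (N.orthogonalProjection x).2

lemma orthogonalProjection_congr {P Q : Submodule ℂ H}
    [P.HasOrthogonalProjection] [Q.HasOrthogonalProjection] (h : P = Q) (x : H) :
    (P.orthogonalProjection x : H) = Q.orthogonalProjection x := by
  subst h; rfl

theorem statement11 [SeparableSpace H]
    (v : ℕ → H) (hv : ∀ n, v n ∈ Metric.closedBall (0 : H) 1)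
    (hvdense : Metric.closedBall (0 : H) 1 ⊆ closure (Set.range v))
    (M : Submodule ℂ H) [CompleteSpace M]
    (Mn : ℕ → Submodule ℂ H) [∀ n, CompleteSpace (Mn n)]
    (hmono : ∀ n, Mn n ≤ Mn (n + 1))
    (hconv : Tendsto (fun n => dhatSub v (Mn n) M) atTop (𝓝 0)) :
    ∀ x : H,
      Tendsto (fun n => ‖((Mn n).orthogonalProjection x : H) - (M.orthogonalProjection x : H)‖)
        atTop (𝓝 0) := by
  classical
  have hmono' : Monotone Mn := monotone_nat_of_le_succ hmono
  -- the candidate limit subspace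
  set N : Submodule ℂ H := (⨆ n, Mn n).topologicalClosure with hNdef
  have hNclosed : IsClosed (N : Set H) := Submodule.isClosed_topologicalClosure _
  haveI : CompleteSpace N := hNclosed.completeSpace_coe
  have hMclosed : IsClosed (M : Set H) :=
    (completeSpace_coe_iff_isComplete.mp ‹CompleteSpace M›).isClosed
  -- nonemptiness of unit balls
  have hzero : ∀ (P : Submodule ℂ H), (0:H) ∈ (P : Set H) ∩ Metric.closedBall 0 1 :=
    fun P => ⟨P.zero_mem, by simp⟩
  -- one-sided estimates from the definition of dw
  have hiInf_le_dw : ∀ (C D : Set H), (0:H) ∈ D → (∀ u ∈ C, ‖u‖ ≤ 1) →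
      ∀ x (hxC : x ∈ C), (⨅ w : D, wnorm v (x - (w:H))) ≤ dw v C D := by
    intro C D h0D hCb x hxC
    have hbdd : BddAbove (Set.range (fun u : C => ⨅ w : D, wnorm v ((u:H) - (w:H)))) := by
      refine ⟨1, ?_⟩
      rintro r ⟨u, rfl⟩
      haveI : Nonempty D := ⟨⟨0, h0D⟩⟩
      refine (ciInf_le ⟨0, ?_⟩ (⟨0, h0D⟩ : D)).trans ?_
      · rintro r ⟨w, rfl⟩; exact wnorm_nonneg' v _
      · simpa using (wnorm_le_norm v hv ((u:H) - 0)).trans (by simpa using hCb u u.2)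
    exact le_ciSup hbdd (⟨x, hxC⟩ : C)
  -- nonnegativity of the iInf
  have hiInf_nonneg : ∀ (D : Set H) (x : H), 0 ≤ (⨅ w : D, wnorm v (x - (w:H))) :=
    fun D x => Real.iInf_nonneg (fun w => wnorm_nonneg' v _)
  -- Step 1 : each Mn n ≤ M
  have hMnM : ∀ n, Mn n ≤ M := by
    intro k
    -- it suffices to treat unit vectors
    have hball : ∀ x ∈ Mn k, ‖x‖ ≤ 1 → x ∈ M := by
      intro x hxk hx1
      set D : Set H := (M : Set H) ∩ Metric.closedBall 0 1 with hDdef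
      haveI : Nonempty D := ⟨⟨0, hzero M⟩⟩
      have hle : ∀ n, k ≤ n → (⨅ w : D, wnorm v (x - (w:H))) ≤ dhatSub v (Mn n) M := by
        intro n hn
        have hxC : x ∈ (Mn n : Set H) ∩ Metric.closedBall 0 1 :=
          ⟨hmono' hn hxk, by simpa [Metric.mem_closedBall] using hx1⟩
        refine (hiInf_le_dw _ D (hzero M) ?_ x hxC).trans (le_max_left _ _)
        intro u hu
        simpa [Metric.mem_closedBall] using hu.2
      have hc0 : (⨅ w : D, wnorm v (x - (w:H))) ≤ 0 := by
        refine ge_of_tendsto hconv ?_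
        filter_upwards [eventually_ge_atTop k] with n hn using hle n hn
      have hceq : (⨅ w : D, wnorm v (x - (w:H))) = 0 := le_antisymm hc0 (hiInf_nonneg D x)
      -- extract approximating sequence
      have hex : ∀ j : ℕ, ∃ w : D, wnorm v (x - (w:H)) < 1 / (j + 1) := by
        intro j
        apply exists_lt_of_ciInf_lt
        rw [hceq]; positivity
      choose w hwlt using hex
      refine mem_of_wnorm_approx v hv hvdense M x hx1 (fun j => (w j : H))
        (fun j => (w j).2.1) (fun j => by simpa [Metric.mem_closedBall] using (w j).2.2) ?_
      refine squeeze_zero (fun j => wnorm_nonneg' v _) (fun j => (hwlt j).le) ?_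
      exact tendsto_one_div_add_atTop_nhds_zero_nat
    intro x hx
    rcases eq_or_ne x 0 with rfl | hx0
    · exact M.zero_mem
    · have hnx : (0:ℝ) < ‖x‖ := norm_pos_iff.mpr hx0
      have h1 : ((‖x‖ : ℂ))⁻¹ • x ∈ Mn k := (Mn k).smul_mem _ hx
      have h2 : ‖((‖x‖ : ℂ))⁻¹ • x‖ ≤ 1 := by
        rw [norm_smul]
        simp [norm_inv, Complex.norm_real, abs_of_nonneg hnx.le,
          inv_mul_cancel₀ hnx.ne']
      have h3 := hball _ h1 h2
      have : x = (‖x‖ : ℂ) • (((‖x‖ : ℂ))⁻¹ • x) := by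
        rw [smul_smul, mul_inv_cancel₀ (by exact_mod_cast hnx.ne'), one_smul]
      rw [this]
      exact M.smul_mem _ h3
  -- Step 2 : M ≤ N
  have hMN : M ≤ N := by
    have hball : ∀ x ∈ M, ‖x‖ ≤ 1 → x ∈ N := by
      intro x hxM hx1
      set D : ℕ → Set H := fun n => (Mn n : Set H) ∩ Metric.closedBall 0 1 with hDdef
      haveI : ∀ n, Nonempty (D n) := fun n => ⟨⟨0, hzero (Mn n)⟩⟩
      have hle : ∀ n, (⨅ w : D n, wnorm v (x - (w:H))) ≤ dhatSub v (Mn n) M := by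
        intro n
        have hxC : x ∈ (M : Set H) ∩ Metric.closedBall 0 1 :=
          ⟨hxM, by simpa [Metric.mem_closedBall] using hx1⟩
        refine (hiInf_le_dw _ (D n) (hzero (Mn n)) ?_ x hxC).trans (le_max_right _ _)
        intro u hu
        simpa [Metric.mem_closedBall] using hu.2
      -- the infima tend to 0
      have htend0 : Tendsto (fun n => (⨅ w : D n, wnorm v (x - (w:H)))) atTop (𝓝 0) :=
        squeeze_zero (fun n => hiInf_nonneg (D n) x) hle hconv
      -- choose approximants
      have hex : ∀ n : ℕ, ∃ w : D n,
          wnorm v (x - (w:H)) < (⨅ w : D n, wnorm v (x - (w:H))) + 1 / (n + 1) := by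
        intro n
        apply exists_lt_of_ciInf_lt
        have : (0:ℝ) < 1 / (n + 1) := by positivity
        linarith
      choose w hwlt using hex
      have hwN : ∀ n, (w n : H) ∈ N := by
        intro n
        have h1 : (w n : H) ∈ Mn n := (w n).2.1
        exact (⨆ m, Mn m).le_topologicalClosure ((le_iSup Mn n) h1)
      refine mem_of_wnorm_approx v hv hvdense N x hx1 (fun n => (w n : H)) hwN
        (fun n => by simpa [Metric.mem_closedBall] using (w n).2.2) ?_
      refine squeeze_zero (fun n => wnorm_nonneg' v _) (fun n => (hwlt n).le) ?_
      have := htend0.add tendsto_one_div_add_atTop_nhds_zero_nat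
      simpa using this
    intro x hx
    rcases eq_or_ne x 0 with rfl | hx0
    · exact N.zero_mem
    · have hnx : (0:ℝ) < ‖x‖ := norm_pos_iff.mpr hx0
      have h1 : ((‖x‖ : ℂ))⁻¹ • x ∈ M := M.smul_mem _ hx
      have h2 : ‖((‖x‖ : ℂ))⁻¹ • x‖ ≤ 1 := by
        rw [norm_smul]
        simp [norm_inv, Complex.norm_real, abs_of_nonneg hnx.le,
          inv_mul_cancel₀ hnx.ne']
      have h3 := hball _ h1 h2
      have : x = (‖x‖ : ℂ) • (((‖x‖ : ℂ))⁻¹ • x) := by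
        rw [smul_smul, mul_inv_cancel₀ (by exact_mod_cast hnx.ne'), one_smul]
      rw [this]
      exact N.smul_mem _ h3
  -- Step 3 : N = M
  have hNM : N = M := by
    refine le_antisymm ?_ hMN
    exact Submodule.topologicalClosure_minimal _ (iSup_le hMnM) hMclosed
  -- conclude via the monotone projection convergence theorem
  intro x
  have htend : Tendsto (fun n => ((Mn n).orthogonalProjection x : H)) atTop
      (𝓝 (((⨆ i, Mn i).topologicalClosure.orthogonalProjection x : H))) :=
    Submodule.starProjection_tendsto_closure_iSup Mn hmono' x
  have ha := orthogonalProjection_congr (show (⨆ i, Mn i).topologicalClosure = M from hNM) x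
  rw [ha] at htend
  exact tendsto_iff_norm_sub_tendsto_zero.mp htend

end KrylovPaper
end
end
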